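/- For every j ∈ ℕ, the j-th Hermite function does not vanish at the classical turning points of the harmonic oscillator at energy 2j+1: κ_j(√(2j+1)) ≠ 0 and κ_j(−√(2j+1)) ≠ 0; equivalently, P_j(√(2j+1)) ≠ 0 and P_j(−√(2j+1)) ≠ 0. -/
import Mathlib


/-- The physicist's Hermite polynomials, as functions on `ℝ`:
`P₀ = 1`, `P₁ = 2x`, `P_{j+2}(x) = 2x·P_{j+1}(x) − 2(j+1)·P_j(x)`. -/
noncomputable def hermiteP : ℕ → ℝ → ℝ
  | 0 => fun _ => 1
  | 1 => fun x => 2 * x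
  | (j + 2) => fun x => 2 * x * hermiteP (j + 1) x - 2 * ((j : ℝ) + 1) * hermiteP j x

/-- The `j`-th `L²`-normalized Hermite function `κ_j(x) = (2^j j! √π)^{-1/2} P_j(x) e^{-x²/2}`. -/
noncomputable def hermiteFun (j : ℕ) (x : ℝ) : ℝ :=
  (Real.sqrt (2 ^ j * (Nat.factorial j : ℝ) * Real.sqrt Real.pi))⁻¹ *
    hermiteP j x * Real.exp (-x ^ 2 / 2)

lemma hermiteP_neg : ∀ (j : ℕ) (x : ℝ), hermiteP j (-x) = (-1) ^ j * hermiteP j x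
  | 0, x => by simp [hermiteP]
  | 1, x => by simp [hermiteP]
  | (j + 2), x => by
    simp only [hermiteP]
    rw [hermiteP_neg (j + 1) x, hermiteP_neg j x]
    ring

lemma hermiteP_pos : ∀ (j : ℕ) (x : ℝ), 0 ≤ x → 2 * (j : ℝ) + 1 ≤ x ^ 2 →
    0 < hermiteP j x ∧ x * hermiteP j x ≤ hermiteP (j + 1) x
  | 0, x, hx, hx2 => by
    simp only [hermiteP]
    constructor
    · norm_num
    · nlinarith
  | (j + 1), x, hx, hx2 => by
    have hx2' : 2 * (j : ℝ) + 1 ≤ x ^ 2 := by push_cast at hx2 ⊢; nlinarith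
    obtain ⟨h1, h2⟩ := hermiteP_pos j x hx hx2'
    have hx1 : 1 ≤ x := by nlinarith
    have hpos : 0 < hermiteP (j + 1) x := by nlinarith
    refine ⟨hpos, ?_⟩
    show x * hermiteP (j + 1) x ≤ hermiteP (j + 2) x
    have : hermiteP (j + 2) x =
        2 * x * hermiteP (j + 1) x - 2 * ((j : ℝ) + 1) * hermiteP j x := by
      simp [hermiteP]
    rw [this]
    push_cast at hx2
    nlinarith [mul_le_mul_of_nonneg_left h2 hx]

/-- The `j`-th Hermite function does not vanish at the classical turning
points `±√(2j+1)` of the harmonic oscillator at energy `2j+1`; equivalently, the Hermite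
polynomial `P_j` does not vanish there. -/
theorem hermite_nonzero_at_turning_points (j : ℕ) :
    hermiteFun j (Real.sqrt (2 * (j : ℝ) + 1)) ≠ 0 ∧
    hermiteFun j (-Real.sqrt (2 * (j : ℝ) + 1)) ≠ 0 ∧
    hermiteP j (Real.sqrt (2 * (j : ℝ) + 1)) ≠ 0 ∧
    hermiteP j (-Real.sqrt (2 * (j : ℝ) + 1)) ≠ 0 := by
  set x := Real.sqrt (2 * (j : ℝ) + 1) with hxdef
  have harg : (0:ℝ) ≤ 2 * (j : ℝ) + 1 := by positivity
  have hx : 0 ≤ x := Real.sqrt_nonneg _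
  have hx2 : 2 * (j : ℝ) + 1 ≤ x ^ 2 := by
    rw [hxdef, Real.sq_sqrt harg]
  have hP : 0 < hermiteP j x := (hermiteP_pos j x hx hx2).1
  have hPne : hermiteP j x ≠ 0 := ne_of_gt hP
  have hPneg : hermiteP j (-x) ≠ 0 := by
    rw [hermiteP_neg]
    exact mul_ne_zero (by positivity) hPne
  have hc : (Real.sqrt (2 ^ j * (Nat.factorial j : ℝ) * Real.sqrt Real.pi))⁻¹ ≠ 0 := by
    have h1 : (0:ℝ) < 2 ^ j * (Nat.factorial j : ℝ) * Real.sqrt Real.pi := by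
      have := Nat.factorial_pos j
      have hpi := Real.sqrt_pos.mpr Real.pi_pos
      positivity
    positivity
  refine ⟨?_, ?_, hPne, hPneg⟩
  · exact mul_ne_zero (mul_ne_zero hc hPne) (Real.exp_ne_zero _)
  · exact mul_ne_zero (mul_ne_zero hc hPneg) (Real.exp_ne_zero _)
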